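/- arXiv:0901.2668 — 2 statements merged into one kernel-verified Lean document; each statement's English description precedes it below -/
import Mathlib

section
/- Let x̄ be a local minimizer of the nonlinear program (NLP): x̄ is feasible and f(x̄) ≤ f(x) for all feasible x in some neighborhood of x̄. If the Mangasarian–Fromovitz constraint qualification holds at x̄, then there exists a multiplier vector for x̄: a pair (λ̄, μ̄) ∈ ℝ^s × ℝ^t with μ̄ ≥ 0 componentwise, μ̄_j = 0 for every j with q_j(x̄) < 0, and ∇f(x̄) + Σ_{i=1}^s λ̄_i ∇p_i(x̄) + Σ_{j=1}^t μ̄_j ∇q_j(x̄) = 0. -/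
open scoped RealInnerProductSpace Gradient
open Filter Topology Metric Asymptotics InnerProductSpace

/-!
Penalty method. For `k ∈ ℕ` minimise
`f x + k * (∑ i, pᵢ(x)² + ∑ j, (q_j(x)⁺)²) + ‖x - x̄‖²` over a small closed ball around `x̄`.
The penalty forces every cluster point of the minimisers to be feasible, and then the local
minimality of `x̄` together with the term `‖x - x̄‖²` forces it to be `x̄`. So along a subsequence
the minimisers are interior points and stationary, which gives multiplier vectors
`(1, 2k pᵢ, 2k q_j⁺)`. After normalisation these have a nonzero limit `(τ, λ, μ)` with `τ ≥ 0`,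
`μ ≥ 0` and `μ_j = 0` for inactive constraints (the Fritz John conditions). MFCQ rules out
`τ = 0`, and dividing by `τ` gives the multipliers.
-/

theorem hasDerivAt_posPart_sq (t : ℝ) : HasDerivAt (fun u : ℝ => u⁺ ^ 2) (2 * t⁺) t := by
  rcases lt_trichotomy t 0 with ht | rfl | ht
  · have hzero : (fun u : ℝ => u⁺ ^ 2) =ᶠ[𝓝 t] fun _ => 0 := by
      filter_upwards [eventually_lt_nhds ht] with u hu
      simp [posPart_eq_zero.2 hu.le]
    simpa [posPart_eq_zero.2 ht.le] using (hasDerivAt_const t (0 : ℝ)).congr_of_eventuallyEq hzero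
  · rw [hasDerivAt_iff_isLittleO_nhds_zero]
    refine (IsBigO.of_bound 1 (Eventually.of_forall fun u => ?_)).trans_isLittleO
      (isLittleO_pow_id one_lt_two)
    rcases le_total u 0 with hu | hu
    · simp [posPart_eq_zero.2 hu, sq_nonneg]
    · simp [posPart_eq_self.2 hu]
  · have hsq : (fun u : ℝ => u⁺ ^ 2) =ᶠ[𝓝 t] fun u => u ^ 2 := by
      filter_upwards [eventually_gt_nhds ht] with u hu
      rw [posPart_eq_self.2 hu.le]
    simpa [posPart_eq_self.2 ht.le] using (hasDerivAt_pow 2 t).congr_of_eventuallyEq hsq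

section Gradient

variable {E : Type*} [NormedAddCommGroup E] [InnerProductSpace ℝ E] [CompleteSpace E]
  {f : E → ℝ}

theorem IsLocalMin.hasGradientAt_eq_zero {f' x : E} (h : IsLocalMin f x)
    (hf : HasGradientAt f f' x) : f' = 0 :=
  (toDual ℝ E).map_eq_zero_iff.1 (h.hasFDerivAt_eq_zero (hasGradientAt_iff_hasFDerivAt.1 hf))

theorem ContDiff.continuous_gradient (hf : ContDiff ℝ 1 f) : Continuous (∇ f) :=
  (toDual ℝ E).symm.continuous.comp (hf.continuous_fderiv one_ne_zero)

end Gradient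

theorem exists_ne_zero_apply_eq_zero_of_tendsto {X W F : Type*} [TopologicalSpace X]
    [NormedAddCommGroup W] [NormedSpace ℝ W] [ProperSpace W]
    [NormedAddCommGroup F] [NormedSpace ℝ F]
    {A : X → W → F} (hA : Continuous (Function.uncurry A))
    (hA_smul : ∀ x (c : ℝ) w, A x (c • w) = c • A x w)
    {C : Set W} (hC : IsClosed C) (hC_smul : ∀ c : ℝ, 0 < c → ∀ w ∈ C, c • w ∈ C)
    {z : ℕ → X} {x : X} (hz : Tendsto z atTop (𝓝 x))
    {w : ℕ → W} (hw : ∀ k, w k ≠ 0) (hwC : ∀ᶠ k in atTop, w k ∈ C)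
    (hAw : Tendsto (fun k => ‖w k‖⁻¹ • A (z k) (w k)) atTop (𝓝 0)) :
    ∃ v ∈ C, v ≠ 0 ∧ A x v = 0 := by
  set u : ℕ → W := fun k => ‖w k‖⁻¹ • w k
  have hu : ∀ k, u k ∈ sphere (0 : W) 1 := fun k => by
    simp [u, norm_smul, hw k]
  obtain ⟨v, hv, ψ, hψ, huv⟩ := (isCompact_sphere (0 : W) 1).tendsto_subseq hu
  refine ⟨v, ?_, ne_zero_of_mem_unit_sphere ⟨v, hv⟩, ?_⟩
  · refine hC.mem_of_tendsto huv ((hψ.tendsto_atTop.eventually hwC).mono fun k hk => ?_)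
    exact hC_smul _ (inv_pos.2 (norm_pos_iff.2 (hw _))) _ hk
  · have hlim : Tendsto (fun k => A (z (ψ k)) (u (ψ k))) atTop (𝓝 (A x v)) :=
      (hA.tendsto (x, v)).comp ((hz.comp hψ.tendsto_atTop).prodMk_nhds huv)
    refine tendsto_nhds_unique hlim ?_
    simp only [u, hA_smul]
    exact hAw.comp hψ.tendsto_atTop

section Constraints

variable {E ι κ : Type*} {p : ι → E → ℝ} {q : κ → E → ℝ} {xbar : E}

def IsFeasible (p : ι → E → ℝ) (q : κ → E → ℝ) (x : E) : Prop :=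
  (∀ i, p i x = 0) ∧ ∀ j, q j x ≤ 0

/-- Sign conditions on a multiplier vector `v = (τ, λ, μ)` at `xbar`. -/
def fritzJohnCone (q : κ → E → ℝ) (xbar : E) : Set (ℝ × (ι → ℝ) × (κ → ℝ)) :=
  {v | 0 ≤ v.1 ∧ (∀ j, 0 ≤ v.2.2 j) ∧ ∀ j, q j xbar < 0 → v.2.2 j = 0}

theorem isClosed_fritzJohnCone : IsClosed (fritzJohnCone (ι := ι) q xbar) := by
  simp only [fritzJohnCone, Set.ofPred_and, Set.ofPred_forall]
  exact (isClosed_le continuous_const continuous_fst).inter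
    ((isClosed_iInter fun j => isClosed_le continuous_const (by fun_prop)).inter
      (isClosed_iInter fun j => isClosed_iInter fun _ =>
        isClosed_eq (by fun_prop) continuous_const))

theorem smul_mem_fritzJohnCone {c : ℝ} (hc : 0 < c)
    {v : ℝ × (ι → ℝ) × (κ → ℝ)} (hv : v ∈ fritzJohnCone q xbar) :
    c • v ∈ fritzJohnCone q xbar := by
  obtain ⟨hτ, hμ, hcompl⟩ := hv
  exact ⟨mul_nonneg hc.le hτ, fun j => mul_nonneg hc.le (hμ j), fun j hj => by simp [hcompl j hj]⟩

def penaltyMultipliers (p : ι → E → ℝ) (q : κ → E → ℝ) (K : ℝ) (x : E) :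
    ℝ × (ι → ℝ) × (κ → ℝ) :=
  (1, fun i => 2 * K * p i x, fun j => 2 * K * (q j x)⁺)

theorem penaltyMultipliers_mem_fritzJohnCone {K : ℝ} (hK : 0 ≤ K) {x : E}
    (hx : ∀ j, q j xbar < 0 → q j x ≤ 0) : penaltyMultipliers p q K x ∈ fritzJohnCone q xbar :=
  ⟨zero_le_one, fun j => by simp only [penaltyMultipliers]; positivity,
    fun j hj => by simp [penaltyMultipliers, posPart_eq_zero.2 (hx j hj)]⟩

variable [Fintype ι] [Fintype κ]

theorem one_le_norm_penaltyMultipliers (K : ℝ) (x : E) : 1 ≤ ‖penaltyMultipliers p q K x‖ := by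
  simp [penaltyMultipliers]

def infeasibility (p : ι → E → ℝ) (q : κ → E → ℝ) (x : E) : ℝ :=
  ∑ i, p i x ^ 2 + ∑ j, (q j x)⁺ ^ 2

theorem infeasibility_nonneg (x : E) : 0 ≤ infeasibility p q x := by
  unfold infeasibility; positivity

theorem infeasibility_eq_zero_iff {x : E} : infeasibility p q x = 0 ↔ IsFeasible p q x := by
  simp [infeasibility, IsFeasible, add_eq_zero_iff_of_nonneg, Finset.sum_nonneg, sq_nonneg,
    Finset.sum_eq_zero_iff_of_nonneg, posPart_eq_zero]

theorem continuous_infeasibility [TopologicalSpace E] (hp : ∀ i, Continuous (p i))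
    (hq : ∀ j, Continuous (q j)) : Continuous (infeasibility p q) := by
  unfold infeasibility
  fun_prop

theorem hasFDerivAt_infeasibility [NormedAddCommGroup E] [NormedSpace ℝ E] {x : E}
    (hp : ∀ i, DifferentiableAt ℝ (p i) x) (hq : ∀ j, DifferentiableAt ℝ (q j) x) :
    HasFDerivAt (infeasibility p q)
      (∑ i, (2 * p i x) • fderiv ℝ (p i) x + ∑ j, (2 * (q j x)⁺) • fderiv ℝ (q j) x) x := by
  have hP := HasFDerivAt.fun_sum (u := Finset.univ) fun i _ =>
    (hasDerivAt_pow 2 (p i x)).comp_hasFDerivAt x (hp i).hasFDerivAt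
  have hQ := HasFDerivAt.fun_sum (u := Finset.univ) fun j _ =>
    (hasDerivAt_posPart_sq (q j x)).comp_hasFDerivAt x (hq j).hasFDerivAt
  exact (hP.add hQ).congr_fderiv (by simp)

end Constraints

section Penalty

variable {E ι κ : Type*} [Fintype ι] [Fintype κ] [NormedAddCommGroup E]
  {f : E → ℝ} {p : ι → E → ℝ} {q : κ → E → ℝ} {xbar : E}

def penalty (f : E → ℝ) (p : ι → E → ℝ) (q : κ → E → ℝ) (xbar : E) (K : ℝ) (x : E) : ℝ :=
  f x + K * infeasibility p q x + ‖x - xbar‖ ^ 2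

theorem continuous_penalty (hf : Continuous f) (hp : ∀ i, Continuous (p i))
    (hq : ∀ j, Continuous (q j)) (K : ℝ) : Continuous (penalty f p q xbar K) := by
  have := continuous_infeasibility hp hq
  unfold penalty
  fun_prop

theorem eq_of_tendsto_penalty_minimizers (hf : Continuous f) (hp : ∀ i, Continuous (p i))
    (hq : ∀ j, Continuous (q j)) (hfeas : IsFeasible p q xbar) {S : Set E} (hS : IsClosed S)
    (hxbar : xbar ∈ S) (hmin : ∀ x ∈ S, IsFeasible p q x → f xbar ≤ f x)
    {K : ℕ → ℝ} (hK : Tendsto K atTop atTop) {z : ℕ → E} (hzS : ∀ k, z k ∈ S)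
    (hz : ∀ k, IsMinOn (penalty f p q xbar (K k)) S (z k)) {y : E}
    (hy : Tendsto z atTop (𝓝 y)) : y = xbar := by
  have hle k : f (z k) + K k * infeasibility p q (z k) + ‖z k - xbar‖ ^ 2 ≤ f xbar := by
    simpa [penalty, infeasibility_eq_zero_iff.2 hfeas] using hz k hxbar
  have hf_lim : Tendsto (fun k => f (z k)) atTop (𝓝 (f y)) := (hf.tendsto y).comp hy
  have hfeas_y : IsFeasible p q y := by
    rw [← infeasibility_eq_zero_iff]
    refine le_antisymm (le_of_tendsto_of_tendsto
      ((continuous_infeasibility hp hq).tendsto y |>.comp hy)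
      (((tendsto_const_nhds (x := f xbar)).sub hf_lim).div_atTop hK) ?_) (infeasibility_nonneg y)
    filter_upwards [hK.eventually_gt_atTop 0] with k hk
    rw [Function.comp_apply, le_div_iff₀ hk]
    nlinarith [hle k, sq_nonneg ‖z k - xbar‖]
  have hfy : f xbar ≤ f y :=
    hmin y (hS.mem_of_tendsto hy (Eventually.of_forall hzS)) hfeas_y
  have hdist : f y + ‖y - xbar‖ ^ 2 ≤ f xbar := by
    have hlim : Tendsto (fun k => f (z k) + ‖z k - xbar‖ ^ 2) atTop
        (𝓝 (f y + ‖y - xbar‖ ^ 2)) :=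
      hf_lim.add ((((continuous_id.sub continuous_const).norm.pow 2).tendsto y).comp hy)
    refine le_of_tendsto hlim ((hK.eventually_ge_atTop 0).mono fun k hk => ?_)
    nlinarith [hle k, infeasibility_nonneg (p := p) (q := q) (z k)]
  have : ‖y - xbar‖ = 0 := by nlinarith [norm_nonneg (y - xbar)]
  simpa [sub_eq_zero] using this

theorem IsLocalMinOn.exists_isLocalMin_penalty_tendsto [ProperSpace E] (hf : Continuous f)
    (hp : ∀ i, Continuous (p i)) (hq : ∀ j, Continuous (q j)) (hfeas : IsFeasible p q xbar)
    (hmin : IsLocalMinOn f {x | IsFeasible p q x} xbar) :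
    ∃ (K : ℕ → ℕ) (z : ℕ → E), Tendsto z atTop (𝓝 xbar) ∧
      ∀ᶠ k in atTop, IsLocalMin (penalty f p q xbar (K k)) (z k) := by
  obtain ⟨r, hr, hminB⟩ : ∃ r > 0, ∀ x ∈ closedBall xbar r, IsFeasible p q x → f xbar ≤ f x :=
    nhds_basis_closedBall.eventually_iff.1 (eventually_nhdsWithin_iff.1 hmin)
  have hB : IsCompact (closedBall xbar r) := isCompact_closedBall xbar r
  choose z hzB hz using fun k : ℕ => hB.exists_isMinOn (nonempty_closedBall.2 hr.le)
    (continuous_penalty (xbar := xbar) hf hp hq k).continuousOn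
  obtain ⟨y, -, φ, hφ, hzy⟩ := hB.tendsto_subseq hzB
  obtain rfl : xbar = y := .symm <| eq_of_tendsto_penalty_minimizers hf hp hq hfeas
    isClosed_closedBall (mem_closedBall_self hr.le) hminB
    (tendsto_natCast_atTop_atTop.comp hφ.tendsto_atTop) (fun k => hzB (φ k)) (fun k => hz (φ k)) hzy
  refine ⟨φ, z ∘ φ, hzy, ?_⟩
  filter_upwards [hzy (isOpen_ball.mem_nhds (mem_ball_self hr))] with k hk
  exact (hz (φ k)).isLocalMin (mem_of_superset (isOpen_ball.mem_nhds hk) ball_subset_closedBall)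

variable [InnerProductSpace ℝ E] [CompleteSpace E]

/-- The gradient of the Lagrangian `τ f + ∑ λᵢ pᵢ + ∑ μ_j q_j` at `x`, for `v = (τ, λ, μ)`. -/
noncomputable def lagrangeGradient (f : E → ℝ) (p : ι → E → ℝ) (q : κ → E → ℝ) (x : E)
    (v : ℝ × (ι → ℝ) × (κ → ℝ)) : E :=
  v.1 • ∇ f x + ∑ i, v.2.1 i • ∇ (p i) x + ∑ j, v.2.2 j • ∇ (q j) x

theorem lagrangeGradient_smul (x : E) (c : ℝ) (v : ℝ × (ι → ℝ) × (κ → ℝ)) :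
    lagrangeGradient f p q x (c • v) = c • lagrangeGradient f p q x v := by
  simp [lagrangeGradient, smul_add, Finset.smul_sum, smul_smul]

theorem continuous_lagrangeGradient (hf : ContDiff ℝ 1 f) (hp : ∀ i, ContDiff ℝ 1 (p i))
    (hq : ∀ j, ContDiff ℝ 1 (q j)) : Continuous (Function.uncurry (lagrangeGradient f p q)) := by
  have := hf.continuous_gradient
  have := fun i => (hp i).continuous_gradient
  have := fun j => (hq j).continuous_gradient
  unfold lagrangeGradient
  fun_prop

theorem IsLocalMin.lagrangeGradient_penaltyMultipliers {K : ℝ} {x : E}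
    (h : IsLocalMin (penalty f p q xbar K) x) (hf : DifferentiableAt ℝ f x)
    (hp : ∀ i, DifferentiableAt ℝ (p i) x) (hq : ∀ j, DifferentiableAt ℝ (q j) x) :
    lagrangeGradient f p q x (penaltyMultipliers p q K x) = -((2 : ℝ) • (x - xbar)) := by
  rw [eq_neg_iff_add_eq_zero]
  refine h.hasGradientAt_eq_zero ?_
  rw [hasGradientAt_iff_hasFDerivAt]
  refine ((hf.hasFDerivAt.add ((hasFDerivAt_infeasibility hp hq).const_mul K)).add
    ((hasFDerivAt_id x).sub_const xbar).norm_sq).congr_fderiv ?_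
  ext v
  simp [lagrangeGradient, penaltyMultipliers, toDual_apply_apply, Finset.mul_sum, mul_assoc,
    mul_left_comm K, add_assoc]

end Penalty

theorem IsLocalMinOn.exists_fritzJohn {E ι κ : Type*} [Fintype ι] [Fintype κ]
    [NormedAddCommGroup E] [InnerProductSpace ℝ E] [FiniteDimensional ℝ E]
    {f : E → ℝ} {p : ι → E → ℝ} {q : κ → E → ℝ} (hf : ContDiff ℝ 1 f)
    (hp : ∀ i, ContDiff ℝ 1 (p i)) (hq : ∀ j, ContDiff ℝ 1 (q j)) {xbar : E}
    (hfeas : IsFeasible p q xbar) (hmin : IsLocalMinOn f {x | IsFeasible p q x} xbar) :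
    ∃ v ∈ fritzJohnCone q xbar, v ≠ 0 ∧ lagrangeGradient f p q xbar v = 0 := by
  obtain ⟨K, z, hz, hz_min⟩ := hmin.exists_isLocalMin_penalty_tendsto hf.continuous
    (fun i => (hp i).continuous) (fun j => (hq j).continuous) hfeas
  set w : ℕ → ℝ × (ι → ℝ) × (κ → ℝ) := fun k => penaltyMultipliers p q (K k) (z k)
  have hd {g : E → ℝ} (hg : ContDiff ℝ 1 g) (x : E) : DifferentiableAt ℝ g x :=
    hg.differentiable one_ne_zero x
  have hstat : ∀ᶠ k in atTop, lagrangeGradient f p q (z k) (w k) = -((2 : ℝ) • (z k - xbar)) :=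
    hz_min.mono fun k hk =>
      hk.lagrangeGradient_penaltyMultipliers (hd hf _) (fun i => hd (hp i) _) (fun j => hd (hq j) _)
  have hwC : ∀ᶠ k in atTop, w k ∈ fritzJohnCone q xbar := by
    have hinactive : ∀ j, q j xbar < 0 → ∀ᶠ k in atTop, q j (z k) ≤ 0 := fun j hj =>
      (((hq j).continuous.tendsto xbar).comp hz).eventually (gt_mem_nhds hj) |>.mono
        fun _ => le_of_lt
    filter_upwards [eventually_all.2 fun j => eventually_imp_distrib_left.2 (hinactive j)]
      with k hk
    exact penaltyMultipliers_mem_fritzJohnCone (Nat.cast_nonneg _) hk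
  have hAw : Tendsto (fun k => ‖w k‖⁻¹ • lagrangeGradient f p q (z k) (w k)) atTop (𝓝 0) := by
    refine squeeze_zero_norm' (a := fun k => 2 * ‖z k - xbar‖) ?_ ?_
    · filter_upwards [hstat] with k hk
      rw [hk, norm_smul, norm_neg, norm_smul, norm_inv, norm_norm, Real.norm_two]
      exact inv_mul_le_of_le_mul₀ (norm_nonneg _) (by positivity)
        (le_mul_of_one_le_left (by positivity) (one_le_norm_penaltyMultipliers _ _))
    · simpa using (hz.sub_const xbar).norm.const_mul 2
  have hw0 : ∀ k, w k ≠ 0 := fun k => ne_of_apply_ne Prod.fst (by simp [w, penaltyMultipliers])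
  exact exists_ne_zero_apply_eq_zero_of_tendsto (A := lagrangeGradient f p q)
    (continuous_lagrangeGradient hf hp hq)
    lagrangeGradient_smul isClosed_fritzJohnCone (fun _ hc _ => smul_mem_fritzJohnCone hc) hz hw0
    hwC hAw

theorem kkt_from_mfcq {n s t : ℕ}
    (f : EuclideanSpace ℝ (Fin n) → ℝ)
    (p : Fin s → EuclideanSpace ℝ (Fin n) → ℝ)
    (q : Fin t → EuclideanSpace ℝ (Fin n) → ℝ)
    (hf : ContDiff ℝ 1 f) (hp : ∀ i, ContDiff ℝ 1 (p i)) (hq : ∀ j, ContDiff ℝ 1 (q j))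
    (xbar : EuclideanSpace ℝ (Fin n))
    (hfeas : (∀ i, p i xbar = 0) ∧ (∀ j, q j xbar ≤ 0))
    (hlocmin : ∃ U ∈ nhds xbar, ∀ x ∈ U,
      ((∀ i, p i x = 0) ∧ (∀ j, q j x ≤ 0)) → f xbar ≤ f x)
    (hMFCQ : ∀ (lam : Fin s → ℝ) (mu : Fin t → ℝ),
      (∀ j, 0 ≤ mu j) → (∀ j, q j xbar < 0 → mu j = 0) →
      (∑ i, lam i • gradient (p i) xbar) + (∑ j, mu j • gradient (q j) xbar) = 0 →
      lam = 0 ∧ mu = 0) :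
    ∃ (lam : Fin s → ℝ) (mu : Fin t → ℝ),
      (∀ j, 0 ≤ mu j) ∧ (∀ j, q j xbar < 0 → mu j = 0) ∧
      gradient f xbar + (∑ i, lam i • gradient (p i) xbar)
        + (∑ j, mu j • gradient (q j) xbar) = 0 := by
  have hmin : IsLocalMinOn f {x | IsFeasible p q x} xbar :=
    let ⟨U, hU, hUmin⟩ := hlocmin
    eventually_nhdsWithin_iff.2 (eventually_of_mem hU hUmin)
  obtain ⟨⟨τ, lam, mu⟩, ⟨hτ, hmu, hcompl⟩, hne, hstat⟩ :=
    hmin.exists_fritzJohn hf hp hq hfeas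
  have hτ0 : τ ≠ 0 := by
    rintro rfl
    obtain ⟨rfl, rfl⟩ := hMFCQ lam mu hmu hcompl (by simpa [lagrangeGradient] using hstat)
    exact hne rfl
  refine ⟨τ⁻¹ • lam, τ⁻¹ • mu, fun j => mul_nonneg (inv_nonneg.2 hτ) (hmu j),
    fun j hj => mul_eq_zero_of_right _ (hcompl j hj), ?_⟩
  simpa [lagrangeGradient, smul_add, Finset.smul_sum, smul_smul, hτ0] using
    congrArg (τ⁻¹ • ·) hstat
end

section
/- Let x̄ be a feasible point of the nonlinear program (NLP) at which the Mangasarian–Fromovitz constraint qualification holds. Then the set of multiplier vectors at x̄, namely {(λ, μ) ∈ ℝ^s × ℝ^t : μ ≥ 0 componentwise, μ_j = 0 for all j with q_j(x̄) < 0, and ∇f(x̄) + Σ_{i=1}^s λ_i ∇p_i(x̄) + Σ_{j=1}^t μ_j ∇q_j(x̄) = 0}, is compact. -/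
open scoped RealInnerProductSpace

/-! The multiplier set is the intersection of the closed cone `C` of admissible multipliers with
an affine fibre `T⁻¹' {-∇f(x̄)}` of the linear map `T (λ, μ) = ∑ λᵢ ∇pᵢ(x̄) + ∑ μⱼ ∇qⱼ(x̄)`.
MFCQ says exactly that `T` vanishes on `C` only at `0`. Minimising `‖T‖` over the compact set
`C ∩ sphere 0 1` then gives `c > 0` with `c ‖x‖ ≤ ‖T x‖` on `C`, so the fibre meets `C` in a
bounded closed set. -/

section ConeInjective

variable {E F : Type*} [NormedAddCommGroup E] [NormedSpace ℝ E] [FiniteDimensional ℝ E]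
  [NormedAddCommGroup F] [NormedSpace ℝ F]

theorem LinearMap.exists_pos_mul_norm_le_norm_of_cone (T : E →ₗ[ℝ] F) {C : Set E}
    (hC : IsClosed C) (hsmul : ∀ x ∈ C, ∀ a : ℝ, 0 < a → a • x ∈ C)
    (hker : ∀ x ∈ C, T x = 0 → x = 0) :
    ∃ c > 0, ∀ x ∈ C, c * ‖x‖ ≤ ‖T x‖ := by
  have hT : Continuous T := T.continuous_of_finiteDimensional
  have hK : IsCompact (C ∩ Metric.sphere 0 1) :=
    (isCompact_sphere 0 1).inter_left hC
  have hpos : ∀ x ∈ C ∩ Metric.sphere 0 1, 0 < ‖T x‖ := fun x ⟨hxC, hx1⟩ =>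
    norm_pos_iff.2 fun h0 => by simp [hker x hxC h0] at hx1
  obtain ⟨c, hc, hcK⟩ := hK.exists_forall_le' hT.norm.continuousOn hpos
  refine ⟨c, hc, fun x hx => ?_⟩
  rcases eq_or_ne x 0 with rfl | hx0
  · simp
  have hnx : 0 < ‖x‖ := norm_pos_iff.2 hx0
  have hunit : ‖x‖⁻¹ • x ∈ C ∩ Metric.sphere 0 1 :=
    ⟨hsmul x hx _ (inv_pos.2 hnx), by simp [norm_smul, hnx.ne']⟩
  have := hcK _ hunit
  rwa [map_smul, norm_smul, norm_inv, norm_norm, le_inv_mul_iff₀ hnx, mul_comm] at this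

theorem LinearMap.isCompact_inter_preimage_singleton_of_cone (T : E →ₗ[ℝ] F) {C : Set E}
    (hC : IsClosed C) (hsmul : ∀ x ∈ C, ∀ a : ℝ, 0 < a → a • x ∈ C)
    (hker : ∀ x ∈ C, T x = 0 → x = 0) (b : F) :
    IsCompact (C ∩ T ⁻¹' {b}) := by
  obtain ⟨c, hc, hcT⟩ := T.exists_pos_mul_norm_le_norm_of_cone hC hsmul hker
  refine Metric.isCompact_of_isClosed_isBounded
    (hC.inter (isClosed_singleton.preimage T.continuous_of_finiteDimensional))
    ((Metric.isBounded_closedBall (x := 0) (r := ‖b‖ / c)).subset ?_)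
  rintro x ⟨hxC, rfl : T x = b⟩
  rw [mem_closedBall_zero_iff, le_div_iff₀ hc, mul_comm]
  exact hcT x hxC

end ConeInjective

section Multipliers

variable {ι κ : Type*}

def multiplierCone (inactive : κ → Prop) : Set ((ι → ℝ) × (κ → ℝ)) :=
  {lm | (∀ j, 0 ≤ lm.2 j) ∧ ∀ j, inactive j → lm.2 j = 0}

theorem isClosed_multiplierCone (inactive : κ → Prop) :
    IsClosed (multiplierCone (ι := ι) inactive) := by
  simp only [multiplierCone, Set.ofPred_and, Set.ofPred_forall]
  exact (isClosed_iInter fun j => isClosed_le continuous_const (by fun_prop)).inter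
    (isClosed_iInter fun j => isClosed_iInter fun _ => isClosed_eq (by fun_prop) continuous_const)

theorem smul_mem_multiplierCone {inactive : κ → Prop} {lm : (ι → ℝ) × (κ → ℝ)}
    (hlm : lm ∈ multiplierCone inactive) {a : ℝ} (ha : 0 ≤ a) :
    a • lm ∈ multiplierCone inactive :=
  ⟨fun j => mul_nonneg ha (hlm.1 j), fun j hj => by simp [hlm.2 j hj]⟩

end Multipliers

theorem multiplier_set_compact_nlp_general {n s t : ℕ}
    (f : EuclideanSpace ℝ (Fin n) → ℝ)
    (p : Fin s → EuclideanSpace ℝ (Fin n) → ℝ)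
    (q : Fin t → EuclideanSpace ℝ (Fin n) → ℝ)
    (xbar : EuclideanSpace ℝ (Fin n))
    (hMFCQ : ∀ (lam : Fin s → ℝ) (mu : Fin t → ℝ),
      (∀ j, 0 ≤ mu j) → (∀ j, q j xbar < 0 → mu j = 0) →
      (∑ i, lam i • gradient (p i) xbar) + (∑ j, mu j • gradient (q j) xbar) = 0 →
      lam = 0 ∧ mu = 0) :
    IsCompact {lm : (Fin s → ℝ) × (Fin t → ℝ) |
      (∀ j, 0 ≤ lm.2 j) ∧ (∀ j, q j xbar < 0 → lm.2 j = 0) ∧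
      gradient f xbar + (∑ i, lm.1 i • gradient (p i) xbar)
        + (∑ j, lm.2 j • gradient (q j) xbar) = 0} := by
  let T := (Fintype.linearCombination ℝ fun i => gradient (p i) xbar).coprod
    (Fintype.linearCombination ℝ fun j => gradient (q j) xbar)
  have hker : ∀ lm ∈ multiplierCone fun j => q j xbar < 0, T lm = 0 → lm = 0 :=
    fun lm ⟨hnonneg, hcompl⟩ h0 => Prod.ext_iff.2 (hMFCQ lm.1 lm.2 hnonneg hcompl h0)
  have hcompact := T.isCompact_inter_preimage_singleton_of_cone (isClosed_multiplierCone _)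
    (fun lm hlm a ha => smul_mem_multiplierCone hlm ha.le) hker (-gradient f xbar)
  -- `cast` rather than `convert`: the latter would split the (defeq) product and norm topologies.
  refine cast (congrArg IsCompact (Set.ext fun lm => ?_)) hcompact
  simp only [multiplierCone, Set.mem_inter_iff, Set.mem_ofPred_eq, Set.mem_preimage,
    Set.mem_singleton_iff, T, LinearMap.coprod_apply, Fintype.linearCombination_apply,
    eq_neg_iff_add_eq_zero, add_assoc, add_comm (gradient f xbar), and_assoc]

theorem multiplier_set_compact_nlp {n s t : ℕ}
    (f : EuclideanSpace ℝ (Fin n) → ℝ)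
    (p : Fin s → EuclideanSpace ℝ (Fin n) → ℝ)
    (q : Fin t → EuclideanSpace ℝ (Fin n) → ℝ)
    (hf : ContDiff ℝ 1 f) (hp : ∀ i, ContDiff ℝ 1 (p i)) (hq : ∀ j, ContDiff ℝ 1 (q j))
    (xbar : EuclideanSpace ℝ (Fin n))
    (hfeas : (∀ i, p i xbar = 0) ∧ (∀ j, q j xbar ≤ 0))
    (hMFCQ : ∀ (lam : Fin s → ℝ) (mu : Fin t → ℝ),
      (∀ j, 0 ≤ mu j) → (∀ j, q j xbar < 0 → mu j = 0) →
      (∑ i, lam i • gradient (p i) xbar) + (∑ j, mu j • gradient (q j) xbar) = 0 →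
      lam = 0 ∧ mu = 0) :
    IsCompact {lm : (Fin s → ℝ) × (Fin t → ℝ) |
      (∀ j, 0 ≤ lm.2 j) ∧ (∀ j, q j xbar < 0 → lm.2 j = 0) ∧
      gradient f xbar + (∑ i, lm.1 i • gradient (p i) xbar)
        + (∑ j, lm.2 j • gradient (q j) xbar) = 0} :=
  multiplier_set_compact_nlp_general f p q xbar hMFCQ
end
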